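/- arXiv:2404.05965 — 6 statements merged into one kernel-verified Lean document; each statement's English description precedes it below -/
import Mathlib

section
/- Let n ≥ 5 and let p be a real number with 0 ≤ p < n−1. Define σ₁(p) = (n−p−1) − (p+1) and σ₂(p) = C(p+1,2) + C(n−p−1,2) − (p+1)(n−p−1) (elementary symmetric polynomials of −1 with multiplicity p+1 and +1 with multiplicity n−p−1, extended to real p via x(x−1)/2 for C(x,2)). Then σ₁(p) > 0 and σ₂(p) > 0 hold simultaneously if and only if p < (n − √n − 2)/2. -/
/-!
Since the multiplicities add up to `n`, `σ₁ = n - 2p - 2` and `σ₂ = (σ₁² - n) / 2`, so both are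
positive exactly when `σ₁ > √n`.
-/

theorem Real.sqrt_lt_iff_pos_and_lt_sq {x y : ℝ} (hx : 0 ≤ x) : √x < y ↔ 0 < y ∧ x < y ^ 2 := by
  constructor
  · intro h
    have hy : 0 < y := (Real.sqrt_nonneg x).trans_lt h
    exact ⟨hy, (Real.sqrt_lt' hy).mp h⟩
  · rintro ⟨hy, hxy⟩
    exact (Real.sqrt_lt hx hy.le).mpr hxy

/-- `σ₂` of `a` copies of `-1` and `b` copies of `+1`, with `C(x, 2) = x (x - 1) / 2`. -/
theorem esymm_two_neg_one_one (a b : ℝ) :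
    a * (a - 1) / 2 + b * (b - 1) / 2 - a * b = ((b - a) ^ 2 - (a + b)) / 2 := by
  ring

theorem P2_formula_general (n : ℕ) (p : ℝ) :
    (0 < ((n : ℝ) - p - 1) - (p + 1) ∧
      0 < (p + 1) * p / 2 + ((n : ℝ) - p - 1) * ((n : ℝ) - p - 2) / 2
            - (p + 1) * ((n : ℝ) - p - 1))
      ↔ p < ((n : ℝ) - Real.sqrt n - 2) / 2 := by
  have hσ₁ : ((n : ℝ) - p - 1) - (p + 1) = n - 2 * p - 2 := by ring
  have hσ₂ : (p + 1) * p / 2 + ((n : ℝ) - p - 1) * ((n : ℝ) - p - 2) / 2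
      - (p + 1) * ((n : ℝ) - p - 1) = ((n - 2 * p - 2) ^ 2 - n) / 2 := by
    convert esymm_two_neg_one_one (p + 1) ((n : ℝ) - p - 1) using 2 <;> ring
  have hsqrt : p < ((n : ℝ) - Real.sqrt n - 2) / 2 ↔ Real.sqrt n < n - 2 * p - 2 := by
    constructor <;> intro h <;> linarith
  rw [hσ₁, hσ₂, hsqrt, Real.sqrt_lt_iff_pos_and_lt_sq n.cast_nonneg,
    div_pos_iff_of_pos_right two_pos, sub_pos (b := (n : ℝ))]

/-- Exact formula for `𝒫₂`: for `n ≥ 5` and `0 ≤ p < n-1`, the first and second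
elementary symmetric functions of `-1` (multiplicity `p+1`) and `+1`
(multiplicity `n-p-1`), extended to real `p`, are both positive iff
`p < (n - √n - 2)/2`. -/
theorem P2_formula (n : ℕ) (hn : 5 ≤ n) (p : ℝ) (hp0 : 0 ≤ p) (hp1 : p < (n : ℝ) - 1) :
    (0 < ((n : ℝ) - p - 1) - (p + 1) ∧
      0 < (p + 1) * p / 2 + ((n : ℝ) - p - 1) * ((n : ℝ) - p - 2) / 2
            - (p + 1) * ((n : ℝ) - p - 1))
      ↔ p < ((n : ℝ) - Real.sqrt n - 2) / 2 :=
  P2_formula_general n p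
end

section
/- Let n ≥ 5 and 0 < p < (n − √n − 2)/2, and define α₀ = (n−4)/4 − p(n−3)/(2(n−1)) − √(4p + 5p² − 5pn + pn² − p²n)/(2(n−1)). Then α₀ ∈ (0, (n−4)/4). -/
/-!
Write `A = (n-1)(n-4)/2 - p(n-3)` and `Q` for the radicand, so that
`α₀ = (A - √Q) / (2(n-1))`. The upper bound is immediate since `p(n-3) > 0` and `√Q ≥ 0`.
For the lower bound one needs `√Q < A`, and the point is the factorisation
`A² - Q = (n-1)(n-4)(((n-2)/2 - p)² - n/4)`, whose last factor is positive since `p` lies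
below its smaller root `(n - √n - 2)/2`.
-/

namespace Alpha0

open Real

lemma sq_sub_disc_eq (N p : ℝ) :
    ((N - 1) * (N - 4) / 2 - p * (N - 3)) ^ 2
        - (4 * p + 5 * p ^ 2 - 5 * p * N + p * N ^ 2 - p ^ 2 * N)
      = (N - 1) * (N - 4) * (((N - 2) / 2 - p) ^ 2 - N / 4) := by
  ring

lemma quarter_lt_sq_of_lt {N p : ℝ} (hp : p < (N - √N - 2) / 2) :
    N / 4 < ((N - 2) / 2 - p) ^ 2 := by
  have hsq := lt_sq_of_sqrt_lt (show √N < N - 2 - 2 * p by linarith)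
  nlinarith

lemma numerator_pos {N p : ℝ} (hN : 4 < N) (hp : p < (N - √N - 2) / 2) :
    0 < (N - 1) * (N - 4) / 2 - p * (N - 3) := by
  have hsqrt : 2 < √N := (lt_sqrt zero_le_two).mpr (by linarith)
  have hp' : p * (N - 3) < (N - √N - 2) / 2 * (N - 3) :=
    mul_lt_mul_of_pos_right hp (by linarith)
  nlinarith

lemma sqrt_disc_lt_numerator {N p : ℝ} (hN : 4 < N) (hp : p < (N - √N - 2) / 2) :
    √(4 * p + 5 * p ^ 2 - 5 * p * N + p * N ^ 2 - p ^ 2 * N)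
      < (N - 1) * (N - 4) / 2 - p * (N - 3) := by
  rw [sqrt_lt' (numerator_pos hN hp)]
  have hsq := sq_sub_disc_eq N p
  have hquarter := quarter_lt_sq_of_lt hp
  have hfactor : 0 < (N - 1) * (N - 4) * (((N - 2) / 2 - p) ^ 2 - N / 4) :=
    mul_pos (mul_pos (by linarith) (by linarith)) (by linarith)
  linarith

lemma leading_terms_eq_div {N p : ℝ} (hN : N ≠ 1) :
    (N - 4) / 4 - p * (N - 3) / (2 * (N - 1))
      = ((N - 1) * (N - 4) / 2 - p * (N - 3)) / (2 * (N - 1)) := by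
  have : N - 1 ≠ 0 := sub_ne_zero.mpr hN
  field_simp
  ring

end Alpha0

open Alpha0 in
/-- The decay exponent `α₀` of the fast-decay ODE solution lies in `(0, (n-4)/4)`. -/
theorem alpha0_mem_Ioo (n : ℕ) (hn : 5 ≤ n) (p : ℝ) (hp0 : 0 < p)
    (hp1 : p < ((n : ℝ) - Real.sqrt n - 2) / 2) (α₀ : ℝ)
    (hα : α₀ = ((n : ℝ) - 4) / 4 - p * ((n : ℝ) - 3) / (2 * ((n : ℝ) - 1))
        - Real.sqrt (4 * p + 5 * p ^ 2 - 5 * p * (n : ℝ) + p * (n : ℝ) ^ 2 - p ^ 2 * (n : ℝ))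
            / (2 * ((n : ℝ) - 1))) :
    α₀ ∈ Set.Ioo 0 (((n : ℝ) - 4) / 4) := by
  have hN : (5 : ℝ) ≤ n := by exact_mod_cast hn
  have hden : (0 : ℝ) < 2 * ((n : ℝ) - 1) := by linarith
  have hsqrt := sqrt_disc_lt_numerator (by linarith) hp1
  constructor
  · rw [hα, leading_terms_eq_div (by linarith), ← sub_div]
    exact div_pos (sub_pos.mpr hsqrt) hden
  · have hlinear : 0 < p * ((n : ℝ) - 3) / (2 * ((n : ℝ) - 1)) :=
      div_pos (mul_pos hp0 (by linarith)) hden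
    have hroot : 0 ≤ Real.sqrt (4 * p + 5 * p ^ 2 - 5 * p * (n : ℝ) + p * (n : ℝ) ^ 2
        - p ^ 2 * (n : ℝ)) / (2 * ((n : ℝ) - 1)) :=
      div_nonneg (Real.sqrt_nonneg _) hden.le
    rw [hα]
    linarith
end

section
/- Let n ≥ 5 and 0 < p < (n − √n − 2)/2, and let α₀ be as in the indicial root formula α₀ = (n−4)/4 − p(n−3)/(2(n−1)) − √(4p + 5p² − 5pn + pn² − p²n)/(2(n−1)). Then −(n−4)/4 + p(n−3)/(n−1) + 1 + α₀ > 0. -/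
/-!
Up to the positive factor `1 / (2(n-1))`, the quantity is `A - √D` with `A = 2(n-1) + p(n-3)`
and `D` the discriminant under the root. The identity `A² - D = (n-1)(4(n-1) + p(3n-8) + p²(n-4))`
shows `D < A²` as soon as `n ≥ 4` and `p ≥ 0`, hence `√D < A`.
-/

namespace ChiOnePlus

def discr (n p : ℝ) : ℝ := 4 * p + 5 * p ^ 2 - 5 * p * n + p * n ^ 2 - p ^ 2 * n

theorem sq_sub_discr (n p : ℝ) :
    (2 * (n - 1) + p * (n - 3)) ^ 2 - discr n p
      = (n - 1) * (4 * (n - 1) + p * (3 * n - 8) + p ^ 2 * (n - 4)) := by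
  unfold discr
  ring

theorem discr_lt_sq {n p : ℝ} (hn : 4 ≤ n) (hp : 0 ≤ p) :
    discr n p < (2 * (n - 1) + p * (n - 3)) ^ 2 := by
  have hpos : 0 < (n - 1) * (4 * (n - 1) + p * (3 * n - 8) + p ^ 2 * (n - 4)) := by
    have : 0 ≤ p * (3 * n - 8) + p ^ 2 * (n - 4) :=
      add_nonneg (mul_nonneg hp (by linarith)) (mul_nonneg (sq_nonneg p) (by linarith))
    exact mul_pos (by linarith) (by linarith)
  linarith [sq_sub_discr n p]

theorem sqrt_discr_lt {n p : ℝ} (hn : 4 ≤ n) (hp : 0 ≤ p) :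
    √(discr n p) < 2 * (n - 1) + p * (n - 3) :=
  (Real.sqrt_lt' (by nlinarith)).2 (discr_lt_sq hn hp)

end ChiOnePlus

open ChiOnePlus in
theorem chi_one_plus_pos_general (n : ℕ) (hn : 5 ≤ n) (p : ℝ) (hp0 : 0 < p)
    (α₀ : ℝ)
    (hα : α₀ = ((n : ℝ) - 4) / 4 - p * ((n : ℝ) - 3) / (2 * ((n : ℝ) - 1))
        - Real.sqrt (4 * p + 5 * p ^ 2 - 5 * p * (n : ℝ) + p * (n : ℝ) ^ 2 - p ^ 2 * (n : ℝ))
            / (2 * ((n : ℝ) - 1))) :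
    0 < -(((n : ℝ) - 4) / 4) + p * ((n : ℝ) - 3) / ((n : ℝ) - 1) + 1 + α₀ := by
  have hn4 : (4 : ℝ) ≤ n := by exact_mod_cast (by omega : 4 ≤ n)
  have hn1 : (0 : ℝ) < 2 * ((n : ℝ) - 1) := by linarith
  have hn1_ne : (n : ℝ) - 1 ≠ 0 := by linarith
  have hroot := sqrt_discr_lt hn4 hp0.le
  have hχ : -(((n : ℝ) - 4) / 4) + p * ((n : ℝ) - 3) / ((n : ℝ) - 1) + 1 + α₀
      = (2 * ((n : ℝ) - 1) + p * ((n : ℝ) - 3) - √(discr n p)) / (2 * ((n : ℝ) - 1)) := by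
    rw [hα, discr]
    field_simp
    ring
  rw [hχ]
  exact div_pos (sub_pos.2 hroot) hn1

/-- Positivity of the indicial root `χ_{1,+}^{(∞)}`:
`-(n-4)/4 + p(n-3)/(n-1) + 1 + α₀ > 0`. -/
theorem chi_one_plus_pos (n : ℕ) (hn : 5 ≤ n) (p : ℝ) (hp0 : 0 < p)
    (hp1 : p < ((n : ℝ) - Real.sqrt n - 2) / 2) (α₀ : ℝ)
    (hα : α₀ = ((n : ℝ) - 4) / 4 - p * ((n : ℝ) - 3) / (2 * ((n : ℝ) - 1))
        - Real.sqrt (4 * p + 5 * p ^ 2 - 5 * p * (n : ℝ) + p * (n : ℝ) ^ 2 - p ^ 2 * (n : ℝ))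
            / (2 * ((n : ℝ) - 1))) :
    0 < -(((n : ℝ) - 4) / 4) + p * ((n : ℝ) - 3) / ((n : ℝ) - 1) + 1 + α₀ :=
  chi_one_plus_pos_general n hn p hp0 α₀ hα
end

section
/- Let δ_j > 0 and δ be real numbers with −δ_j < δ < δ_j. Let ω ∈ C²(ℝ) be compactly supported in (0, ∞), and let ψ = ω'' − δ_j²ω. Then ∫₀^∞ ω² e^{2δτ} dτ ≤ (δ_j² − δ²)^{−2} ∫₀^∞ ψ² e^{2δτ} dτ. -/
open MeasureTheory Set

/-!
With `c = δ_j² - δ²` and `v = ω e^{δτ}`, conjugating by the weight gives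
`ψ e^{δτ} = v'' - 2δ v' - c v`. Testing against `v` and integrating by parts
(`∫ v v' = 0`, `∫ v'' v = -∫ v'²`) yields `c ‖v‖² ≤ -⟪ψ e^{δτ}, v⟫`, and expanding
`‖ψ e^{δτ} + c v‖² ≥ 0` turns this into `c² ‖v‖² ≤ ‖ψ e^{δτ}‖²`. The supports of `ω` and `ψ`
lie in `[0, ∞)`, so the integrals over `(0, ∞)` are integrals over `ℝ`.
-/

theorem integral_sq_le_inv_sq_mul_of_le_neg_integral_mul {α : Type*} [MeasurableSpace α]
    {μ : Measure α} {f g : α → ℝ} {c : ℝ} (hc : 0 < c)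
    (hf : Integrable (fun x => f x ^ 2) μ) (hg : Integrable (fun x => g x ^ 2) μ)
    (hfg : Integrable (fun x => f x * g x) μ)
    (h : c * ∫ x, g x ^ 2 ∂μ ≤ -∫ x, f x * g x ∂μ) :
    ∫ x, g x ^ 2 ∂μ ≤ (c ^ 2)⁻¹ * ∫ x, f x ^ 2 ∂μ := by
  have hsq : 0 ≤ ∫ x, f x ^ 2 ∂μ + 2 * c * ∫ x, f x * g x ∂μ + c ^ 2 * ∫ x, g x ^ 2 ∂μ :=
    calc 0 ≤ ∫ x, (f x + c * g x) ^ 2 ∂μ := integral_nonneg fun x => sq_nonneg _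
      _ = _ := by
        rw [show (fun x => (f x + c * g x) ^ 2)
            = fun x => f x ^ 2 + 2 * c * (f x * g x) + c ^ 2 * g x ^ 2 from funext fun x => by ring,
          integral_add (hf.fun_add (hfg.const_mul _)) (hg.const_mul _),
          integral_add hf (hfg.const_mul _), integral_const_mul, integral_const_mul]
  rw [inv_mul_eq_div, le_div_iff₀ (by positivity)]
  nlinarith

theorem integral_mul_deriv_eq_neg_integral_deriv_mul {u v : ℝ → ℝ} (hu : ContDiff ℝ 1 u)
    (hu_cpt : HasCompactSupport u) (hv : ContDiff ℝ 1 v) :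
    ∫ x, u x * deriv v x = -∫ x, deriv u x * v x := by
  have huc := hu.continuous
  have hu'c := hu.continuous_deriv le_rfl
  have hvc := hv.continuous
  have hv'c := hv.continuous_deriv le_rfl
  exact integral_mul_deriv_eq_deriv_mul_of_integrable
    (fun x _ => (hu.differentiable one_ne_zero x).hasDerivAt)
    (fun x _ => (hv.differentiable one_ne_zero x).hasDerivAt)
    ((huc.mul hv'c).integrable_of_hasCompactSupport hu_cpt.mul_right)
    ((hu'c.mul hvc).integrable_of_hasCompactSupport hu_cpt.deriv.mul_right)
    ((huc.mul hvc).integrable_of_hasCompactSupport hu_cpt.mul_right)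

theorem integral_deriv_mul_self_eq_zero {u : ℝ → ℝ} (hu : ContDiff ℝ 1 u)
    (hu_cpt : HasCompactSupport u) : ∫ x, deriv u x * u x = 0 := by
  have h := integral_mul_deriv_eq_neg_integral_deriv_mul hu hu_cpt hu
  simp_rw [mul_comm (u _)] at h
  linarith

theorem integral_deriv_deriv_mul_self {u : ℝ → ℝ} (hu : ContDiff ℝ 2 u)
    (hu_cpt : HasCompactSupport u) : ∫ x, deriv (deriv u) x * u x = -∫ x, deriv u x ^ 2 := by
  simp_rw [mul_comm (deriv (deriv u) _), sq]
  exact integral_mul_deriv_eq_neg_integral_deriv_mul (hu.of_le one_le_two) hu_cpt hu.deriv'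

noncomputable def secondOrderOp (a c : ℝ) (u : ℝ → ℝ) (x : ℝ) : ℝ :=
  deriv (deriv u) x + a * deriv u x - c * u x

theorem integral_secondOrderOp_mul_self {u : ℝ → ℝ} (hu : ContDiff ℝ 2 u)
    (hu_cpt : HasCompactSupport u) (a c : ℝ) :
    ∫ x, secondOrderOp a c u x * u x = -(∫ x, deriv u x ^ 2) - c * ∫ x, u x ^ 2 := by
  have hu' : ContDiff ℝ 1 (deriv u) := hu.deriv'
  have integrable {f : ℝ → ℝ} (hf : Continuous f) : Integrable (fun x => f x * u x) :=
    (hf.mul hu.continuous).integrable_of_hasCompactSupport hu_cpt.mul_left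
  have h0 := integrable (hu'.continuous_deriv le_rfl)
  have h1 := integrable hu'.continuous
  have h2 := integrable hu.continuous
  simp only [secondOrderOp, add_mul, sub_mul, mul_assoc]
  rw [integral_sub (h0.fun_add (h1.const_mul a)) (h2.const_mul c),
    integral_add h0 (h1.const_mul a), integral_const_mul, integral_const_mul, integral_deriv_deriv_mul_self hu hu_cpt,
    integral_deriv_mul_self_eq_zero (hu.of_le one_le_two) hu_cpt]
  simp only [sq, mul_zero, add_zero]

theorem integral_sq_le_of_secondOrderOp {u : ℝ → ℝ} (hu : ContDiff ℝ 2 u)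
    (hu_cpt : HasCompactSupport u) (a : ℝ) {c : ℝ} (hc : 0 < c) :
    ∫ x, u x ^ 2 ≤ (c ^ 2)⁻¹ * ∫ x, secondOrderOp a c u x ^ 2 := by
  have hLu : Continuous (secondOrderOp a c u) := by
    have := hu.continuous_deriv one_le_two
    have := hu.deriv'.continuous_deriv le_rfl
    unfold secondOrderOp
    fun_prop
  have hLu_cpt : HasCompactSupport (secondOrderOp a c u) :=
    (hu_cpt.deriv.deriv.add hu_cpt.deriv.mul_left).sub hu_cpt.mul_left
  have sq_cpt {f : ℝ → ℝ} (hf : HasCompactSupport f) : HasCompactSupport (fun x => f x ^ 2) :=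
    hf.comp_left (g := fun y => y ^ 2) (zero_pow two_ne_zero)
  refine integral_sq_le_inv_sq_mul_of_le_neg_integral_mul hc
    ((hLu.pow 2).integrable_of_hasCompactSupport (sq_cpt hLu_cpt))
    ((hu.continuous.pow 2).integrable_of_hasCompactSupport (sq_cpt hu_cpt))
    ((hLu.mul hu.continuous).integrable_of_hasCompactSupport hu_cpt.mul_left) ?_
  rw [integral_secondOrderOp_mul_self hu hu_cpt]
  have : 0 ≤ ∫ x, deriv u x ^ 2 := integral_nonneg fun x => sq_nonneg _
  linarith

theorem secondOrderOp_mul_exp {ω : ℝ → ℝ} (hω : ContDiff ℝ 2 ω) (δ k x : ℝ) :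
    secondOrderOp (-2 * δ) (k - δ ^ 2) (fun τ => ω τ * Real.exp (δ * τ)) x
      = (deriv (deriv ω) x - k * ω x) * Real.exp (δ * x) := by
  have hexp (τ : ℝ) : HasDerivAt (fun τ => Real.exp (δ * τ)) (Real.exp (δ * τ) * δ) τ := by
    simpa using ((hasDerivAt_id τ).const_mul δ).exp
  have hω' (τ : ℝ) : HasDerivAt ω (deriv ω τ) τ :=
    (hω.differentiable two_ne_zero τ).hasDerivAt
  have hω'' (τ : ℝ) : HasDerivAt (deriv ω) (deriv (deriv ω) τ) τ :=
    (hω.deriv'.differentiable one_ne_zero τ).hasDerivAt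
  have hd1 : deriv (fun τ => ω τ * Real.exp (δ * τ))
      = fun τ => (deriv ω τ + δ * ω τ) * Real.exp (δ * τ) :=
    funext fun τ => ((hω' τ).mul (hexp τ)).deriv.trans (by ring)
  have hd2 : deriv (fun τ => (deriv ω τ + δ * ω τ) * Real.exp (δ * τ)) x
      = (deriv (deriv ω) x + 2 * δ * deriv ω x + δ ^ 2 * ω x) * Real.exp (δ * x) :=
    (((hω'' x).add ((hω' x).const_mul δ)).mul (hexp x)).deriv.trans <| by
      simp only [Pi.add_apply]; ring
  simp only [secondOrderOp, hd1, hd2]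
  ring

theorem setIntegral_Ioi_eq_integral_of_support_subset_Ici {E : Type*} [NormedAddCommGroup E]
    [NormedSpace ℝ E] {μ : Measure ℝ} [NullSingletonClass μ] {f : ℝ → E} {a : ℝ}
    (hf : Function.support f ⊆ Ici a) : ∫ x in Ioi a, f x ∂μ = ∫ x, f x ∂μ := by
  rw [← integral_Ici_eq_integral_Ioi,
    setIntegral_eq_integral_of_forall_compl_eq_zero fun x hx => Function.notMem_support.mp
      fun hfx => hx (hf hfx)]

theorem weighted_estimate_model_general (δj δ : ℝ) (h₁ : -δj < δ) (h₂ : δ < δj)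
    (ω : ℝ → ℝ) (hω : ContDiff ℝ 2 ω) (hcpt : HasCompactSupport ω)
    (hsupp : Function.support ω ⊆ Set.Ioi 0)
    (ψ : ℝ → ℝ) (hψ : ∀ τ, ψ τ = deriv (deriv ω) τ - δj ^ 2 * ω τ) :
    ∫ τ in Set.Ioi (0 : ℝ), (ω τ) ^ 2 * Real.exp (2 * δ * τ)
      ≤ ((δj ^ 2 - δ ^ 2) ^ 2)⁻¹ * ∫ τ in Set.Ioi (0 : ℝ), (ψ τ) ^ 2 * Real.exp (2 * δ * τ) := by
  have hc : 0 < δj ^ 2 - δ ^ 2 := by nlinarith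
  have hω_supp : tsupport ω ⊆ Ici 0 := closure_Ioi (0 : ℝ) ▸ closure_mono hsupp
  have hψ_supp : Function.support ψ ⊆ tsupport ω := by
    rw [show ψ = deriv (deriv ω) - fun τ => δj ^ 2 * ω τ from funext hψ]
    exact (Function.support_sub _ _).trans <| union_subset
      (support_deriv_subset.trans tsupport_deriv_subset)
      ((Function.support_mul_subset_right _ _).trans (subset_tsupport ω))
  have weighted_integral_eq (f : ℝ → ℝ) (hf : Function.support f ⊆ Ici 0) :
      ∫ τ in Ioi 0, f τ ^ 2 * Real.exp (2 * δ * τ) = ∫ τ, (f τ * Real.exp (δ * τ)) ^ 2 := by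
    have hF : Function.support (fun τ => f τ ^ 2 * Real.exp (2 * δ * τ)) ⊆ Ici 0 :=
      (Function.support_mul_subset_left _ _).trans <|
        (Function.support_pow _ two_ne_zero).subset.trans hf
    rw [setIntegral_Ioi_eq_integral_of_support_subset_Ici hF]
    congr 1 with τ
    rw [mul_pow, sq (Real.exp _), ← Real.exp_add]
    ring_nf
  rw [weighted_integral_eq ω ((subset_tsupport ω).trans hω_supp),
    weighted_integral_eq ψ (hψ_supp.trans hω_supp)]
  have := integral_sq_le_of_secondOrderOp
    (by fun_prop : ContDiff ℝ 2 fun τ => ω τ * Real.exp (δ * τ)) hcpt.mul_right (-2 * δ) hc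
  simpa only [secondOrderOp_mul_exp hω, ← hψ] using this

/-- Weighted `L²` a priori estimate for the model operator `𝔎_j ω = ω'' - δ_j² ω`
for functions compactly supported in `(0, ∞)`, with weight `e^{2δτ}`,
when `-δ_j < δ < δ_j`. -/
theorem weighted_estimate_model (δj δ : ℝ) (hδj : 0 < δj) (h₁ : -δj < δ) (h₂ : δ < δj)
    (ω : ℝ → ℝ) (hω : ContDiff ℝ 2 ω) (hcpt : HasCompactSupport ω)
    (hsupp : Function.support ω ⊆ Set.Ioi 0)
    (ψ : ℝ → ℝ) (hψ : ∀ τ, ψ τ = deriv (deriv ω) τ - δj ^ 2 * ω τ) :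
    ∫ τ in Set.Ioi (0 : ℝ), (ω τ) ^ 2 * Real.exp (2 * δ * τ)
      ≤ ((δj ^ 2 - δ ^ 2) ^ 2)⁻¹ * ∫ τ in Set.Ioi (0 : ℝ), (ψ τ) ^ 2 * Real.exp (2 * δ * τ) :=
  weighted_estimate_model_general δj δ h₁ h₂ ω hω hcpt hsupp ψ hψ
end

section
/- Let δ > 0 and δ_j > 0 with 0 < δ < δ_j. Let ω ∈ C²(ℝ) be compactly supported in (τ₀, ∞) for some τ₀ ∈ ℝ, and let ψ = ω'' − δ_j²ω − e^{−2τ}ω. Then ∫ ω² e^{2δτ} dτ ≤ C ∫ ψ² e^{2δτ} dτ with a constant C depending only on δ and δ_j (independent of τ₀ and ω). -/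
/-!
Write `E(τ) = e^{2δτ}` and `ψ = ω'' - V ω` with `V = δj² + e^{-2τ}`. One integration by parts gives
`-∫ ψ ω E = ∫ ((ω' + δω)² + (V - δ²) ω²) E ≥ (δj² - δ²) ∫ ω² E`,
where the term `e^{-2τ} ω²` is simply dropped since it is nonnegative; this is why the constant
does not depend on the support of `ω`. Young's inequality `-2ε ψ ω ≤ ψ² + ε² ω²` then absorbs
the cross term, giving `(δj² - δ²)² ∫ ω² E ≤ ∫ ψ² E`.
-/

open MeasureTheory Real

lemma sq_mul_integral_le_of_le_neg_integral {α : Type*} [MeasurableSpace α] {μ : Measure α}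
    {f g w : α → ℝ} {ε : ℝ} (hε : 0 < ε) (hw : ∀ x, 0 ≤ w x)
    (hf : Integrable (fun x => f x ^ 2 * w x) μ) (hg : Integrable (fun x => g x ^ 2 * w x) μ)
    (hgf : Integrable (fun x => g x * f x * w x) μ)
    (h : ε * ∫ x, f x ^ 2 * w x ∂μ ≤ -∫ x, g x * f x * w x ∂μ) :
    ε ^ 2 * ∫ x, f x ^ 2 * w x ∂μ ≤ ∫ x, g x ^ 2 * w x ∂μ := by
  have young : -(2 * ε) * ∫ x, g x * f x * w x ∂μ ≤
      (∫ x, g x ^ 2 * w x ∂μ) + ε ^ 2 * ∫ x, f x ^ 2 * w x ∂μ := by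
    rw [← integral_const_mul, ← integral_const_mul, ← integral_add hg (hf.const_mul _)]
    refine integral_mono (hgf.const_mul _) (hg.add (hf.const_mul _)) fun x => ?_
    have := mul_nonneg (sq_nonneg (g x + ε * f x)) (hw x)
    linarith
  nlinarith

section

variable {ω : ℝ → ℝ} {δ : ℝ}

lemma hasDerivAt_mul_exp (hω : Differentiable ℝ ω) (τ : ℝ) :
    HasDerivAt (fun τ => ω τ * exp (2 * δ * τ))
      ((deriv ω τ + 2 * δ * ω τ) * exp (2 * δ * τ)) τ := by
  have hE : HasDerivAt (fun τ => exp (2 * δ * τ)) (exp (2 * δ * τ) * (2 * δ)) τ := by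
    simpa using ((hasDerivAt_id τ).const_mul (2 * δ)).exp
  exact ((hω τ).hasDerivAt.fun_mul hE).congr_deriv (by ring)

lemma integral_mul_exp_mul_deriv_deriv (hω : ContDiff ℝ 2 ω) (hc : HasCompactSupport ω) :
    ∫ τ, ω τ * exp (2 * δ * τ) * deriv (deriv ω) τ =
      -∫ τ, (deriv ω τ + 2 * δ * ω τ) * exp (2 * δ * τ) * deriv ω τ := by
  have h₁ : Continuous (deriv ω) := hω.continuous_deriv one_le_two
  have h₂ : Continuous (deriv (deriv ω)) := (hω.iterate_deriv' 0 2).continuous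
  have hcs : HasCompactSupport fun τ => ω τ * exp (2 * δ * τ) := hc.mul_right
  refine integral_mul_deriv_eq_deriv_mul_of_integrable
    (fun τ _ => hasDerivAt_mul_exp (hω.differentiable two_ne_zero) τ)
    (fun τ _ => (hω.differentiable_deriv_two τ).hasDerivAt) ?_ ?_ ?_
  · exact (by fun_prop : Continuous _).integrable_of_hasCompactSupport hcs.mul_right
  · exact (by fun_prop : Continuous _).integrable_of_hasCompactSupport hc.deriv.mul_left
  · exact (by fun_prop : Continuous _).integrable_of_hasCompactSupport hcs.mul_right

lemma mul_integral_sq_mul_exp_le_neg_integral (hω : ContDiff ℝ 2 ω) (hc : HasCompactSupport ω)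
    {V ψ : ℝ → ℝ} {ε : ℝ} (hV : Continuous V) (hVε : ∀ τ, δ ^ 2 + ε ≤ V τ)
    (hψ : ∀ τ, ψ τ = deriv (deriv ω) τ - V τ * ω τ) :
    ε * ∫ τ, ω τ ^ 2 * exp (2 * δ * τ) ≤ -∫ τ, ψ τ * ω τ * exp (2 * δ * τ) := by
  have h₁ : Continuous (deriv ω) := hω.continuous_deriv one_le_two
  have h₂ : Continuous (deriv (deriv ω)) := (hω.iterate_deriv' 0 2).continuous
  have hω₀ : Continuous ω := hω.continuous
  have hc₂ : HasCompactSupport fun τ => ω τ ^ 2 := hc.comp_left (zero_pow two_ne_zero)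
  have hA : Integrable fun τ => ε * (ω τ ^ 2 * exp (2 * δ * τ)) :=
    (by fun_prop : Continuous _).integrable_of_hasCompactSupport hc₂.mul_right.mul_left
  have hC : Integrable fun τ => (deriv ω τ + 2 * δ * ω τ) * exp (2 * δ * τ) * deriv ω τ :=
    (by fun_prop : Continuous _).integrable_of_hasCompactSupport hc.deriv.mul_left
  have hD : Integrable fun τ => ω τ * exp (2 * δ * τ) * deriv (deriv ω) τ :=
    (by fun_prop : Continuous _).integrable_of_hasCompactSupport hc.mul_right.mul_right
  have hX : Integrable fun τ => V τ * ω τ ^ 2 * exp (2 * δ * τ) :=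
    (by fun_prop : Continuous _).integrable_of_hasCompactSupport hc₂.mul_left.mul_right
  have hψω : ∫ τ, ψ τ * ω τ * exp (2 * δ * τ) =
      (∫ τ, ω τ * exp (2 * δ * τ) * deriv (deriv ω) τ) - ∫ τ, V τ * ω τ ^ 2 * exp (2 * δ * τ) := by
    rw [← integral_sub hD hX]
    congr 1 with τ
    rw [hψ]
    ring
  calc ε * ∫ τ, ω τ ^ 2 * exp (2 * δ * τ)
      = ∫ τ, ε * (ω τ ^ 2 * exp (2 * δ * τ)) := (integral_const_mul ε _).symm
    _ ≤ ∫ τ, ((deriv ω τ + 2 * δ * ω τ) * exp (2 * δ * τ) * deriv ω τ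
          + V τ * ω τ ^ 2 * exp (2 * δ * τ)) := by
        refine integral_mono hA (hC.add hX) fun τ => ?_
        -- the difference is `((ω' + δ ω)² + (V - δ² - ε) ω²) e^{2δτ}`
        have := mul_nonneg (add_nonneg (sq_nonneg (deriv ω τ + δ * ω τ))
          (mul_nonneg (sub_nonneg.2 (hVε τ)) (sq_nonneg (ω τ)))) (exp_pos (2 * δ * τ)).le
        linarith
    _ = -∫ τ, ψ τ * ω τ * exp (2 * δ * τ) := by
        rw [integral_add hC hX, hψω, integral_mul_exp_mul_deriv_deriv hω hc]
        ring

theorem sq_mul_integral_sq_mul_exp_le (hω : ContDiff ℝ 2 ω) (hc : HasCompactSupport ω)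
    {V ψ : ℝ → ℝ} {ε : ℝ} (hε : 0 < ε) (hV : Continuous V) (hVε : ∀ τ, δ ^ 2 + ε ≤ V τ)
    (hψ : ∀ τ, ψ τ = deriv (deriv ω) τ - V τ * ω τ) :
    ε ^ 2 * ∫ τ, ω τ ^ 2 * exp (2 * δ * τ) ≤ ∫ τ, ψ τ ^ 2 * exp (2 * δ * τ) := by
  have hω₀ : Continuous ω := hω.continuous
  have hψ₀ : Continuous ψ := by
    have : Continuous (deriv (deriv ω)) := (hω.iterate_deriv' 0 2).continuous
    rw [funext hψ]
    fun_prop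
  have hψc : HasCompactSupport ψ := by
    rw [funext hψ]
    exact hc.deriv.deriv.sub hc.mul_left
  refine sq_mul_integral_le_of_le_neg_integral hε (fun τ => (exp_pos _).le) ?_ ?_ ?_
    (mul_integral_sq_mul_exp_le_neg_integral hω hc hV hVε hψ)
  · exact (by fun_prop : Continuous _).integrable_of_hasCompactSupport
      (hc.comp_left (zero_pow two_ne_zero)).mul_right
  · exact (by fun_prop : Continuous _).integrable_of_hasCompactSupport
      (hψc.comp_left (zero_pow two_ne_zero)).mul_right
  · exact (by fun_prop : Continuous _).integrable_of_hasCompactSupport hψc.mul_right.mul_right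

end

/-- Uniform weighted `L²` a priori estimate for the Bessel-type operator
`K_j ω = ω'' - δ_j² ω - e^{-2τ} ω`: for `0 < δ < δ_j` the constant is
independent of the support parameter `τ₀`. -/
theorem weighted_estimate_bessel (δ δj : ℝ) (hδ : 0 < δ) (hδδj : δ < δj) :
    ∃ C : ℝ, 0 < C ∧
      ∀ (τ₀ : ℝ) (ω : ℝ → ℝ), ContDiff ℝ 2 ω → HasCompactSupport ω →
        Function.support ω ⊆ Set.Ioi τ₀ →
        ∀ ψ : ℝ → ℝ,
          (∀ τ, ψ τ = deriv (deriv ω) τ - δj ^ 2 * ω τ - Real.exp (-2 * τ) * ω τ) →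
          ∫ τ, (ω τ) ^ 2 * Real.exp (2 * δ * τ)
            ≤ C * ∫ τ, (ψ τ) ^ 2 * Real.exp (2 * δ * τ) := by
  have hε : 0 < δj ^ 2 - δ ^ 2 := by nlinarith
  refine ⟨((δj ^ 2 - δ ^ 2) ^ 2)⁻¹, by positivity, fun τ₀ ω hω hc _ ψ hψ => ?_⟩
  rw [le_inv_mul_iff₀ (by positivity)]
  refine sq_mul_integral_sq_mul_exp_le hω hc (V := fun τ => δj ^ 2 + exp (-2 * τ)) hε
    (by fun_prop) (fun τ => by linarith [exp_pos (-2 * τ)]) fun τ => ?_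
  rw [hψ]
  ring
end

section
/- Let n ≥ 5 and 0 < p < (n−√n−2)/2, with b₀, b₁, b₂ as in the limiting linearization (b₂ < 0, b₁ = p b₂, b₀ = −((n−4)/8)(4p²+8p−4np−5n+4+n²)). If the quadratic f₀(γ) = b₀ − b₁γ + b₂γ² has two distinct real roots γ₀⁻ < γ₀⁺, then 0 < γ₀⁻ < p/2 < γ₀⁺; if the roots are complex conjugates, their common real part equals p/2. -/
/-!
In the admissible range `n - 2p - 2 > √n`, and `b₀ = -((n - 4)/8)((n - 2p - 2)² - n)`, so both
`b₀` and `b₂` are negative. Since `b₁ = p b₂`, Vieta's formulas give `γ₀⁻ + γ₀⁺ = p`, so the roots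
are symmetric about `p/2`, and `γ₀⁻ γ₀⁺ = b₀ / b₂ > 0`. Complex roots come in a conjugate pair,
to which the same sum formula applies.
-/

open ComplexConjugate

theorem quadratic_vieta {K : Type*} [Field K] {a b c x y : K} (hxy : x ≠ y)
    (hx : c - b * x + a * x ^ 2 = 0) (hy : c - b * y + a * y ^ 2 = 0) :
    a * (x + y) = b ∧ a * (x * y) = c := by
  have hsum : a * (x + y) = b := by
    have hfactor : (y - x) * (a * (x + y) - b) = 0 := by linear_combination hy - hx
    exact sub_eq_zero.mp ((mul_eq_zero.mp hfactor).resolve_left (sub_ne_zero.mpr hxy.symm))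
  exact ⟨hsum, by linear_combination -hx + x * hsum⟩

theorem discrim_nonneg_of_quadratic_root {a b c x : ℝ} (hx : c - b * x + a * x ^ 2 = 0) :
    0 ≤ b ^ 2 - 4 * a * c := by
  have h := discrim_eq_sq_of_quadratic_eq_zero (a := a) (b := -b) (c := c) (x := x)
    (by linear_combination hx)
  rw [discrim] at h
  nlinarith [sq_nonneg (2 * a * x + -b)]

theorem two_mul_mul_re_eq_of_quadratic_root {a b c : ℝ} (hdisc : b ^ 2 - 4 * a * c < 0) {z : ℂ}
    (hz : (c : ℂ) - b * z + a * z ^ 2 = 0) : a * (2 * z.re) = b := by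
  have hconj : (c : ℂ) - b * conj z + a * conj z ^ 2 = 0 := by
    simpa using congrArg conj hz
  by_cases hreal : conj z = z
  · rw [← Complex.conj_eq_iff_re.mp hreal] at hz
    exact absurd (discrim_nonneg_of_quadratic_root (x := z.re) (by exact_mod_cast hz))
      hdisc.not_ge
  · have hsum := (quadratic_vieta (Ne.symm hreal) hz hconj).1
    rw [Complex.add_conj] at hsum
    exact_mod_cast hsum

section ModelCoefficients

variable {n : ℕ} {p : ℝ}

theorem lt_sq_of_admissible (hp : p < ((n : ℝ) - Real.sqrt n - 2) / 2) :
    (n : ℝ) < ((n : ℝ) - 2 * p - 2) ^ 2 := by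
  have hsqrt : Real.sqrt n < (n : ℝ) - 2 * p - 2 := by linarith
  calc (n : ℝ) = Real.sqrt n ^ 2 := (Real.sq_sqrt n.cast_nonneg).symm
    _ < ((n : ℝ) - 2 * p - 2) ^ 2 := by gcongr

theorem model_b₂_neg (hn : 5 ≤ n) (hp : p < ((n : ℝ) - Real.sqrt n - 2) / 2) :
    -((n : ℝ) - 4) * ((n : ℝ) - 2 * p - 1) / 8 < 0 := by
  have hn' : (5 : ℝ) ≤ n := by exact_mod_cast hn
  have hsqrt : 0 ≤ Real.sqrt n := Real.sqrt_nonneg _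
  have hpos : 0 < (n : ℝ) - 2 * p - 1 := by linarith
  nlinarith

theorem model_b₀_neg (hn : 5 ≤ n) (hp : p < ((n : ℝ) - Real.sqrt n - 2) / 2) :
    -(((n : ℝ) - 4) / 8) *
      (4 * p ^ 2 + 8 * p - 4 * (n : ℝ) * p - 5 * (n : ℝ) + 4 + (n : ℝ) ^ 2) < 0 := by
  have hn' : (5 : ℝ) ≤ n := by exact_mod_cast hn
  have hsq := lt_sq_of_admissible hp
  nlinarith

end ModelCoefficients

/-- Structure of the indicial roots `γ₀^±` of the `j = 0` mode: two distinct
real roots of `f₀(γ) = b₀ - b₁γ + b₂γ²` satisfy `0 < γ₀⁻ < p/2 < γ₀⁺`, while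
complex conjugate roots have real part `p/2`. -/
theorem indicial_roots_j_zero (n : ℕ) (hn : 5 ≤ n) (p : ℝ) (hp0 : 0 < p)
    (hp1 : p < ((n : ℝ) - Real.sqrt n - 2) / 2)
    (b₀ b₁ b₂ : ℝ)
    (hb₂ : b₂ = -((n : ℝ) - 4) * ((n : ℝ) - 2 * p - 1) / 8)
    (hb₁ : b₁ = p * b₂)
    (hb₀ : b₀ = -(((n : ℝ) - 4) / 8) *
        (4 * p ^ 2 + 8 * p - 4 * (n : ℝ) * p - 5 * (n : ℝ) + 4 + (n : ℝ) ^ 2)) :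
    (∀ γm γp : ℝ, γm < γp →
        b₀ - b₁ * γm + b₂ * γm ^ 2 = 0 → b₀ - b₁ * γp + b₂ * γp ^ 2 = 0 →
        0 < γm ∧ γm < p / 2 ∧ p / 2 < γp) ∧
    (b₁ ^ 2 - 4 * b₂ * b₀ < 0 →
      ∀ z : ℂ, (b₀ : ℂ) - (b₁ : ℂ) * z + (b₂ : ℂ) * z ^ 2 = 0 → z.re = p / 2) := by
  have hb₂neg : b₂ < 0 := hb₂ ▸ model_b₂_neg hn hp1
  have hb₀neg : b₀ < 0 := hb₀ ▸ model_b₀_neg hn hp1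
  subst hb₁
  constructor
  · intro γm γp hlt hm hp
    obtain ⟨hsum, hprod⟩ := quadratic_vieta hlt.ne hm hp
    have hsum' : γm + γp = p := by
      rw [mul_comm p] at hsum; exact mul_left_cancel₀ hb₂neg.ne hsum
    have hprod' : 0 < γm * γp := by nlinarith
    refine ⟨?_, by linarith, by linarith⟩
    nlinarith
  · intro hdisc z hz
    have hre := two_mul_mul_re_eq_of_quadratic_root hdisc hz
    rw [mul_comm p] at hre
    linarith [mul_left_cancel₀ hb₂neg.ne hre]
end
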